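/- The helicity ±1 polarization sum for a spin-2 field is: for all indices i, j, m, n, ∑_{h ∈ {+1,−1}} e^{(h)}ᵢⱼ(k̂) · e^{(h)}ₘₙ(−k̂) = k̂ᵢk̂ₘ·πⱼₙ + k̂ⱼk̂ₘ·πᵢₙ + k̂ᵢk̂ₙ·πⱼₘ + k̂ⱼk̂ₙ·πᵢₘ, where πᵢⱼ = δᵢⱼ − k̂ᵢk̂ⱼ. -/

import Mathlib

/-!
Reversing `k̂` swaps the helicities, `ê^±(−k̂) = ê^∓(k̂)`, so each product pairs `ê^±` with `ê^∓`.
Writing `ê^± = (a ± i b)/N` with `a = n̂ − (n̂·k̂)k̂` and `b = k̂ × n̂`, one gets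
`ê⁺_p ê⁻_q + ê⁻_p ê⁺_q = 2(a_p a_q + b_p b_q)/N²`. Since `a`, `b`, `k̂` are mutually orthogonal and
`|a|² = |b|² = 1 − (n̂·k̂)² = N²/2`, this is the transverse projector `π_pq`. In the tensors the factor
`i² = −1` cancels the sign of `−k̂`, which leaves `k̂ᵢk̂ₘπⱼₙ + k̂ⱼk̂ₘπᵢₙ + k̂ᵢk̂ₙπⱼₘ + k̂ⱼk̂ₙπᵢₘ`.
-/

open Complex

/-- Dot product on `ℝ³` realized as `Fin 3 → ℝ`. -/
noncomputable def dotR (u v : Fin 3 → ℝ) : ℝ := ∑ i, u i * v i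

/-- The complex polarization vectors
`ê^±(k̂)ᵢ = (n̂ᵢ − (n̂·k̂)k̂ᵢ ± i(k̂×n̂)ᵢ)/√(2(1 − (n̂·k̂)²))`,
with the sign `s = ±1` labelling the helicity. -/
noncomputable def polVec (n k : Fin 3 → ℝ) (s : ℝ) : Fin 3 → ℂ := fun i =>
  (((n i - dotR n k * k i : ℝ) : ℂ) +
      (s : ℂ) * Complex.I * (((crossProduct k n) i : ℝ) : ℂ)) /
    ((Real.sqrt (2 * (1 - (dotR n k) ^ 2)) : ℝ) : ℂ)

/-- The spin-2 polarization tensors: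
`e⁽⁰⁾ᵢⱼ = √3(k̂ᵢk̂ⱼ − δᵢⱼ/3)`, `e⁽±¹⁾ᵢⱼ = i(k̂ᵢ·ê^±ⱼ + k̂ⱼ·ê^±ᵢ)`,
`e⁽±²⁾ᵢⱼ = √2·ê^±ᵢ·ê^±ⱼ`, labelled by the helicity `h ∈ {−2,−1,0,1,2} ⊆ ℤ`. -/
noncomputable def polTen2 (n k : Fin 3 → ℝ) (h : ℤ) : Fin 3 → Fin 3 → ℂ :=
  if h = 0 then
    fun i j => ((Real.sqrt 3 : ℝ) : ℂ) *
      (((k i : ℝ) : ℂ) * ((k j : ℝ) : ℂ) - if i = j then (1 : ℂ)/3 else 0)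
  else if h = 1 then
    fun i j => Complex.I *
      (((k i : ℝ) : ℂ) * polVec n k 1 j + ((k j : ℝ) : ℂ) * polVec n k 1 i)
  else if h = -1 then
    fun i j => Complex.I *
      (((k i : ℝ) : ℂ) * polVec n k (-1) j + ((k j : ℝ) : ℂ) * polVec n k (-1) i)
  else if h = 2 then
    fun i j => ((Real.sqrt 2 : ℝ) : ℂ) * polVec n k 1 i * polVec n k 1 j
  else if h = -2 then
    fun i j => ((Real.sqrt 2 : ℝ) : ℂ) * polVec n k (-1) i * polVec n k (-1) j
  else 0

/-- The transverse projector `πᵢⱼ = δᵢⱼ − k̂ᵢk̂ⱼ`. -/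
noncomputable def projT (k : Fin 3 → ℝ) (i j : Fin 3) : ℝ :=
  (if i = j then 1 else 0) - k i * k j

section

variable (n k : Fin 3 → ℝ)

lemma dotR_sq_le_one (hk : dotR k k = 1) (hn : dotR n n = 1) : dotR n k ^ 2 ≤ 1 := by
  have h := Finset.sum_mul_sq_le_sq_mul_sq Finset.univ n k
  simp only [dotR, sq] at hk hn h ⊢
  rwa [hn, hk, one_mul] at h

lemma dotR_neg_right : dotR n (-k) = -dotR n k := by
  simp [dotR]

lemma polVec_neg (s : ℝ) : polVec n (-k) s = polVec n k (-s) := by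
  ext i
  simp only [polVec, dotR_neg_right, map_neg, LinearMap.neg_apply, Pi.neg_apply, neg_sq]
  push_cast
  ring

lemma transverse_mul_add_cross_mul (hk : dotR k k = 1) (i j : Fin 3) :
    (n i - dotR n k * k i) * (n j - dotR n k * k j) + crossProduct k n i * crossProduct k n j =
      (dotR n n - dotR n k ^ 2) * projT k i j := by
  have identity :
      (n i - dotR n k * k i) * (n j - dotR n k * k j) + crossProduct k n i * crossProduct k n j =
        (dotR n n - dotR n k ^ 2) * projT k i j +
          (dotR k k - 1) * (dotR n n * (if i = j then 1 else 0) - n i * n j) := by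
    fin_cases i <;> fin_cases j <;> simp [dotR, Fin.sum_univ_three, projT, cross_apply] <;> ring
  rw [identity, hk, sub_self, zero_mul, add_zero]

lemma polVec_one_mul_neg_one_add_eq_projT (hk : dotR k k = 1) (hn : dotR n n = 1)
    (hkn : dotR n k ^ 2 ≠ 1) (p q : Fin 3) :
    polVec n k 1 p * polVec n k (-1) q + polVec n k (-1) p * polVec n k 1 q = projT k p q := by
  have hN2 : ((√(2 * (1 - dotR n k ^ 2)) : ℝ) : ℂ) ^ 2 = 2 * (1 - dotR n k ^ 2) := by
    exact_mod_cast Real.sq_sqrt (by linarith [dotR_sq_le_one n k hk hn])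
  have hN2_ne : (2 * (1 - dotR n k ^ 2) : ℂ) ≠ 0 := by
    exact_mod_cast mul_ne_zero two_ne_zero (sub_ne_zero.mpr (Ne.symm hkn))
  have frame : (((n p - dotR n k * k p) * (n q - dotR n k * k q) +
      crossProduct k n p * crossProduct k n q : ℝ) : ℂ) = ((1 - dotR n k ^ 2) * projT k p q : ℝ) := by
    rw [transverse_mul_add_cross_mul n k hk p q, hn]
  simp only [polVec]
  rw [div_mul_div_comm, div_mul_div_comm, ← add_div, ← sq, hN2, div_eq_iff hN2_ne]
  push_cast at frame ⊢
  linear_combination 2 * frame - 2 * (crossProduct k n p : ℂ) * crossProduct k n q * I_sq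

lemma polTen2_apply_of_helicity_one {h : ℤ} (hh : h = 1 ∨ h = -1) (i j : Fin 3) :
    polTen2 n k h i j = I * (k i * polVec n k h j + k j * polVec n k h i) := by
  rcases hh with rfl | rfl <;> simp [polTen2]

end

/-- The helicity `±1` polarization sum for a spin-2 field:
`∑_{h∈{+1,−1}} e^{(h)}ᵢⱼ(k̂)·e^{(h)}ₘₙ(−k̂)
  = k̂ᵢk̂ₘπⱼₙ + k̂ⱼk̂ₘπᵢₙ + k̂ᵢk̂ₙπⱼₘ + k̂ⱼk̂ₙπᵢₘ`. -/
theorem polTen2_sum_helicity_one (n k : Fin 3 → ℝ)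
    (hk : dotR k k = 1) (hn : dotR n n = 1) (hkn : (dotR n k) ^ 2 ≠ 1)
    (i j m m' : Fin 3) :
    polTen2 n k 1 i j * polTen2 n (fun l => -k l) 1 m m' +
      polTen2 n k (-1) i j * polTen2 n (fun l => -k l) (-1) m m' =
      ((k i * k m * projT k j m' + k j * k m * projT k i m' +
          k i * k m' * projT k j m + k j * k m' * projT k i m : ℝ) : ℂ) := by
  have hpair := polVec_one_mul_neg_one_add_eq_projT n k hk hn hkn
  simp only [polTen2_apply_of_helicity_one _ _ (Or.inl rfl),
    polTen2_apply_of_helicity_one _ _ (Or.inr rfl), show (fun l => -k l) = -k from rfl, polVec_neg,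
    Pi.neg_apply, Int.cast_one, Int.cast_neg, neg_neg, mul_mul_mul_comm I, I_mul_I]
  push_cast
  linear_combination k i * k m * hpair j m' + k j * k m * hpair i m' +
    k i * k m' * hpair j m + k j * k m' * hpair i m
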